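/- Suppose t_∞ := lim_{n→∞} (l_1⋯l_n)/(r_1⋯r_n) exists and equals +∞. Then for any non-decreasing sequence of stopping times (T_m)_{m≥1} with E[T_m] < ∞ for every m and T_m → T_∂ almost surely, E[X_{T_m}] → 0 as m → ∞. -/

import Mathlib

open MeasureTheory Filter Topology Finset
open scoped ENNReal NNReal Classical

/-- Partial products `t_n = (l_1 ⋯ l_n)/(r_1 ⋯ r_n)`, with `t_0 = 1`. -/
noncomputable def tp (l r : ℕ → ℝ) (n : ℕ) : ℝ :=
  (∏ i ∈ Finset.Icc 1 n, l i) / (∏ i ∈ Finset.Icc 1 n, r i)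

/-- `x_n = Σ_{i=0}^{n-1} t_i`. -/
noncomputable def xp (l r : ℕ → ℝ) (n : ℕ) : ℝ :=
  ∑ i ∈ Finset.range n, tp l r i

/-- The natural filtration of the process `X` (σ-algebra generated by `X_0, …, X_m`). -/
def natFilt {Ω : Type*} (X : ℕ → Ω → ℕ) (m : ℕ) : MeasurableSpace Ω :=
  ⨆ i ∈ Finset.range (m + 1), MeasurableSpace.comap (X i) ⊤

/-- A birth–death chain on ℕ started at `k`, with up–probabilities `r n` and
down–probabilities `l n` for states `n ≥ 1`, and `0` absorbing.  The Markov
property is encoded by conditioning on arbitrary events of the natural filtration. -/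
structure IsBDChain {Ω : Type*} [MeasurableSpace Ω] (P : Measure Ω)
    (X : ℕ → Ω → ℕ) (k : ℕ) (l r : ℕ → ℝ) : Prop where
  isProb : IsProbabilityMeasure P
  one_le_k : 1 ≤ k
  l_pos : ∀ n, 1 ≤ n → 0 < l n
  r_pos : ∀ n, 1 ≤ n → 0 < r n
  lr_one : ∀ n, 1 ≤ n → l n + r n = 1
  meas : ∀ m, Measurable (X m)
  init : ∀ᵐ ω ∂P, X 0 ω = k
  absorb : ∀ᵐ ω ∂P, ∀ m, X m ω = 0 → X (m + 1) ω = 0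
  step_up : ∀ m n, 1 ≤ n → ∀ A : Set Ω, MeasurableSet[natFilt X m] A →
    P (A ∩ {ω | X m ω = n ∧ X (m + 1) ω = n + 1}) =
      ENNReal.ofReal (r n) * P (A ∩ {ω | X m ω = n})
  step_down : ∀ m n, 1 ≤ n → ∀ A : Set Ω, MeasurableSet[natFilt X m] A →
    P (A ∩ {ω | X m ω = n ∧ X (m + 1) ω = n - 1}) =
      ENNReal.ofReal (l n) * P (A ∩ {ω | X m ω = n})

/-- A (finite-valued) stopping time for the natural filtration of `X`. -/
def IsBDStop {Ω : Type*} (X : ℕ → Ω → ℕ) (T : Ω → ℕ) : Prop :=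
  ∀ m, MeasurableSet[natFilt X m] {ω | T ω = m}

/-- An extended-ℕ-valued stopping time for the natural filtration of `X`. -/
def IsBDStopE {Ω : Type*} (X : ℕ → Ω → ℕ) (T : Ω → ℕ∞) : Prop :=
  ∀ m : ℕ, MeasurableSet[natFilt X m] {ω | T ω = (m : ℕ∞)}

/-- First hitting time of the set `S ⊆ ℕ` by the path `m ↦ X m ω`, valued in `ℕ∞`. -/
noncomputable def hitTime {Ω : Type*} (X : ℕ → Ω → ℕ) (S : Set ℕ) (ω : Ω) : ℕ∞ :=
  sInf ((fun m : ℕ => (m : ℕ∞)) '' {m | X m ω ∈ S})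

/-- `T_∂`: the first hitting time of `0`, with value `∞` if `0` is never hit. -/
noncomputable def hit0 {Ω : Type*} (X : ℕ → Ω → ℕ) (ω : Ω) : ℕ∞ :=
  hitTime X {0} ω

/-- `G_T^n`: the number of times `m` with `0 ≤ m ≤ T-1` and `X_m = n` (finite `T`). -/
def count {Ω : Type*} (X : ℕ → Ω → ℕ) (n : ℕ) (T : Ω → ℕ) (ω : Ω) : ℕ :=
  ((Finset.range (T ω)).filter fun m => X m ω = n).card

/-- `G_τ^n` for an `ℕ∞`-valued time `τ`, valued in `ℝ≥0∞`. -/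
noncomputable def countE {Ω : Type*} (X : ℕ → Ω → ℕ) (n : ℕ) (τ : Ω → ℕ∞) (ω : Ω) : ℝ≥0∞ :=
  ∑' m : ℕ, if (m : ℕ∞) < τ ω ∧ X m ω = n then 1 else 0

/-!
The scale function `x_n = t_0 + ⋯ + t_{n-1}` is harmonic for the chain, so `x(X_m)` is a
nonnegative martingale and converges a.s. Away from `0` every step of the chain moves `x(X_m)` by
at least `min_n t_n > 0` (a minimum exists since `t_n → ∞`), so the chain is absorbed a.s. and
`X_{T_m} → 0` a.s. Optional stopping and Fatou give `E[x(X_{T_m})] ≤ x_k`, and `t_n → ∞` makes `x`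
superlinear, so the `X_{T_m}` are uniformly integrable and `E[X_{T_m}] → 0`.
-/

section NaturalFiltration

variable {Ω : Type*} (X : ℕ → Ω → ℕ)

lemma comap_le_natFilt {i m : ℕ} (h : i ≤ m) :
    MeasurableSpace.comap (X i) ⊤ ≤ natFilt X m :=
  le_biSup (fun i => MeasurableSpace.comap (X i) ⊤) (Finset.mem_range_succ_iff.2 h)

lemma natFilt_mono : Monotone (natFilt X) := fun _ _ h =>
  iSup₂_le fun _ hi => comap_le_natFilt X ((Finset.mem_range_succ_iff.1 hi).trans h)

lemma measurable_natFilt {i m : ℕ} (h : i ≤ m) : Measurable[natFilt X m] (X i) :=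
  Measurable.of_comap_le ((MeasurableSpace.comap_mono le_top).trans (comap_le_natFilt X h))

variable [MeasurableSpace Ω]

lemma natFilt_le (hX : ∀ i, Measurable (X i)) (m : ℕ) : natFilt X m ≤ ‹MeasurableSpace Ω› :=
  iSup₂_le fun i _ => (hX i).comap_le.trans' (MeasurableSpace.comap_mono le_top)

def natFiltration (hX : ∀ i, Measurable (X i)) : Filtration ℕ ‹MeasurableSpace Ω› :=
  ⟨natFilt X, natFilt_mono X, natFilt_le X hX⟩

variable {X}

lemma IsBDStop.measurable (hX : ∀ i, Measurable (X i)) {T : Ω → ℕ} (hT : IsBDStop X T) :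
    Measurable T :=
  measurable_to_countable' fun m => natFilt_le X hX m _ (hT m)

omit [MeasurableSpace Ω] in
lemma IsBDStop.measurableSet_lt {T : Ω → ℕ} (hT : IsBDStop X T) (j : ℕ) :
    MeasurableSet[natFilt X j] {ω | j < T ω} := by
  have : {ω | j < T ω} = (⋃ i ∈ range (j + 1), {ω | T ω = i})ᶜ := by
    ext ω
    simp only [Set.mem_compl_iff, Set.mem_iUnion, mem_range, exists_prop, Set.mem_ofPred_eq]
    exact ⟨fun h ⟨i, hi, hTi⟩ => by omega, fun h => by_contra fun h' => h ⟨T ω, by omega, rfl⟩⟩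
  rw [this]
  exact (MeasurableSet.biUnion (Finset.countable_toSet _) fun i hi =>
    natFilt_mono X (Nat.lt_succ_iff.1 (mem_range.1 hi)) _ (hT i)).compl

end NaturalFiltration

section HitTime

variable {Ω : Type*} {X : ℕ → Ω → ℕ} {S : Set ℕ} {ω : Ω}

lemma hitTime_ne_top_of_mem {m : ℕ} (h : X m ω ∈ S) : hitTime X S ω ≠ ⊤ :=
  ne_top_of_le_ne_top (ENat.natCast_ne_top m) (sInf_le ⟨m, h, rfl⟩)

lemma mem_of_hitTime_eq {j : ℕ} (h : hitTime X S ω = j) : X j ω ∈ S := by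
  have hne : ((fun m : ℕ => (m : ℕ∞)) '' {m | X m ω ∈ S}).Nonempty := by
    by_contra hempty
    rw [Set.not_nonempty_iff_eq_empty] at hempty
    simp [hitTime, hempty] at h
  obtain ⟨m, hm, hmj⟩ := csInf_mem hne
  rwa [← ENat.natCast_inj.1 (hmj.trans h)]

end HitTime

lemma measurable_comp_time {Ω β : Type*} [MeasurableSpace Ω] [MeasurableSpace β]
    {X : ℕ → Ω → β} (hX : ∀ i, Measurable (X i)) {τ : Ω → ℕ} (hτ : Measurable τ) :
    Measurable fun ω => X (τ ω) ω :=
  (measurable_from_prod_countable_right (f := fun p : ℕ × Ω => X p.1 p.2) hX).comp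
    (hτ.prodMk measurable_id)

lemma setLIntegral_eq_tsum_fiber {Ω : Type*} [MeasurableSpace Ω] {μ : Measure Ω} {Y : Ω → ℕ}
    (hY : Measurable Y) {A : Set Ω} (hA : MeasurableSet A) (f : Ω → ℝ≥0∞) :
    ∫⁻ ω in A, f ω ∂μ = ∑' n, ∫⁻ ω in A ∩ {ω | Y ω = n}, f ω ∂μ := by
  conv_lhs => rw [show A = ⋃ n, A ∩ {ω | Y ω = n} by ext; simp]
  refine lintegral_iUnion (fun n => hA.inter (hY (measurableSet_singleton n))) ?_ f
  exact fun m n hmn => Set.disjoint_left.2 fun ω h1 h2 => hmn (h1.2.symm.trans h2.2)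

lemma tendsto_lintegral_of_superlinear_bound {Ω : Type*} [MeasurableSpace Ω] {μ : Measure Ω}
    [IsFiniteMeasure μ] {Y : ℕ → Ω → ℕ} (hY : ∀ m, Measurable (Y m)) {φ : ℕ → ℝ}
    (hφ : ∀ ε > 0, ∀ᶠ n : ℕ in atTop, (n : ℝ) ≤ ε * φ n) {C : ℝ≥0∞} (hC : C ≠ ⊤)
    (hbound : ∀ m, ∫⁻ ω, ENNReal.ofReal (φ (Y m ω)) ∂μ ≤ C)
    (hzero : ∀ᵐ ω ∂μ, ∀ᶠ m in atTop, Y m ω = 0) :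
    Tendsto (fun m => ∫⁻ ω, (Y m ω : ℝ≥0∞) ∂μ) atTop (𝓝 0) := by
  rw [ENNReal.tendsto_nhds_zero]
  intro δ hδ
  have hδ2 : 0 < δ / 2 := ENNReal.half_pos hδ.ne'
  obtain ⟨ε, hεC, hε⟩ : ∃ ε, ENNReal.ofReal ε * C < δ / 2 ∧ 0 < ε := by
    have h : Tendsto (fun ε => ENNReal.ofReal ε * C) (𝓝 0) (𝓝 (ENNReal.ofReal 0 * C)) :=
      ENNReal.Tendsto.mul_const (ENNReal.tendsto_ofReal tendsto_id) (Or.inr hC)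
    rw [ENNReal.ofReal_zero, zero_mul] at h
    exact (((h.mono_left (nhdsWithin_le_nhds (s := Set.Ioi 0))).eventually
      (gt_mem_nhds hδ2)).and self_mem_nhdsWithin).exists
  obtain ⟨N, hN⟩ := eventually_atTop.1 (hφ ε hε)
  set Ymin : ℕ → Ω → ℝ≥0∞ := fun m ω => min (Y m ω : ℝ≥0∞) N
  have hYmin : ∀ m, Measurable (Ymin m) := fun m =>
    (measurable_from_nat (f := fun n : ℕ => min (n : ℝ≥0∞) N)).comp (hY m)
  have hsplit : ∀ n : ℕ,
      (n : ℝ≥0∞) ≤ min (n : ℝ≥0∞) N + ENNReal.ofReal ε * ENNReal.ofReal (φ n) := by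
    intro n
    rcases le_or_gt n N with hn | hn
    · rw [min_eq_left (by exact_mod_cast hn)]
      exact le_self_add
    · refine le_add_left ?_
      rw [← ENNReal.ofReal_mul hε.le, ← ENNReal.ofReal_natCast]
      exact ENNReal.ofReal_le_ofReal (hN n hn.le)
  have hsplit_int : ∀ m, ∫⁻ ω, (Y m ω : ℝ≥0∞) ∂μ ≤ ∫⁻ ω, Ymin m ω ∂μ + δ / 2 := fun m => calc
    _ ≤ ∫⁻ ω, Ymin m ω + ENNReal.ofReal ε * ENNReal.ofReal (φ (Y m ω)) ∂μ :=
        lintegral_mono fun ω => hsplit _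
    _ = ∫⁻ ω, Ymin m ω ∂μ + ENNReal.ofReal ε * ∫⁻ ω, ENNReal.ofReal (φ (Y m ω)) ∂μ := by
        rw [lintegral_add_left (hYmin m), lintegral_const_mul' _ _ ENNReal.ofReal_ne_top]
    _ ≤ ∫⁻ ω, Ymin m ω ∂μ + ENNReal.ofReal ε * C := by gcongr; exact hbound m
    _ ≤ ∫⁻ ω, Ymin m ω ∂μ + δ / 2 := by gcongr
  have htr : Tendsto (fun m => ∫⁻ ω, Ymin m ω ∂μ) atTop (𝓝 0) := by
    simpa using tendsto_lintegral_of_dominated_convergence (f := fun _ => 0)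
      (fun _ => (N : ℝ≥0∞)) hYmin (fun m => ae_of_all _ fun ω => min_le_right _ _)
      (lintegral_const_lt_top (ENNReal.natCast_ne_top N)).ne
      (hzero.mono fun ω hω => tendsto_const_nhds.congr' (hω.mono fun m hm => by simp [Ymin, hm]))
  filter_upwards [ENNReal.tendsto_nhds_zero.1 htr (δ / 2) hδ2] with m hm
  calc _ ≤ _ := hsplit_int m
    _ ≤ δ / 2 + δ / 2 := by gcongr
    _ = δ := ENNReal.add_halves δ

/-- The transition operator of the chain: `transOp l r g n = E[g(X_{j+1}) | X_j = n]`. -/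
noncomputable def transOp (l r : ℕ → ℝ) (g : ℕ → ℝ≥0∞) (n : ℕ) : ℝ≥0∞ :=
  if n = 0 then g 0 else ENNReal.ofReal (r n) * g (n + 1) + ENNReal.ofReal (l n) * g (n - 1)

section ScaleFunction

variable {l r : ℕ → ℝ}

lemma tp_pos (hl : ∀ n, 1 ≤ n → 0 < l n) (hr : ∀ n, 1 ≤ n → 0 < r n) (n : ℕ) :
    0 < tp l r n :=
  div_pos (prod_pos fun i hi => hl i (mem_Icc.1 hi).1)
    (prod_pos fun i hi => hr i (mem_Icc.1 hi).1)

lemma tp_succ_mul (hr : ∀ n, 1 ≤ n → 0 < r n) (n : ℕ) :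
    tp l r (n + 1) * r (n + 1) = tp l r n * l (n + 1) := by
  have hprod : 0 < ∏ i ∈ Icc 1 n, r i := prod_pos fun i hi => hr i (mem_Icc.1 hi).1
  have hrn := hr (n + 1) n.succ_pos
  simp only [tp, prod_Icc_succ_top (Nat.le_add_left 1 n)]
  field_simp

lemma xp_succ (n : ℕ) : xp l r (n + 1) = xp l r n + tp l r n :=
  sum_range_succ _ n

lemma xp_nonneg (hl : ∀ n, 1 ≤ n → 0 < l n) (hr : ∀ n, 1 ≤ n → 0 < r n) (n : ℕ) :
    0 ≤ xp l r n :=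
  sum_nonneg fun i _ => (tp_pos hl hr i).le

lemma xp_harmonic (hr : ∀ n, 1 ≤ n → 0 < r n) (hlr : ∀ n, 1 ≤ n → l n + r n = 1) (n : ℕ) :
    r (n + 1) * xp l r (n + 2) + l (n + 1) * xp l r n = xp l r (n + 1) := by
  linear_combination r (n + 1) * xp_succ (l := l) (r := r) (n + 1)
    - l (n + 1) * xp_succ (l := l) (r := r) n + tp_succ_mul (l := l) hr n
    + xp l r (n + 1) * hlr (n + 1) n.succ_pos

lemma eventually_natCast_le_mul_xp (hl : ∀ n, 1 ≤ n → 0 < l n) (hr : ∀ n, 1 ≤ n → 0 < r n)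
    (htlim : Tendsto (tp l r) atTop atTop) {ε : ℝ} (hε : 0 < ε) :
    ∀ᶠ n : ℕ in atTop, (n : ℝ) ≤ ε * xp l r n := by
  obtain ⟨M, hM⟩ := eventually_atTop.1 (htlim.eventually_ge_atTop (2 / ε))
  filter_upwards [eventually_ge_atTop (2 * M)] with n hn
  have hsum : ((n - M : ℕ) : ℝ) * (2 / ε) ≤ xp l r n := calc
    ((n - M : ℕ) : ℝ) * (2 / ε) = ∑ _i ∈ Ico M n, 2 / ε := by simp
    _ ≤ ∑ i ∈ Ico M n, tp l r i := sum_le_sum fun i hi => hM i (mem_Ico.1 hi).1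
    _ ≤ xp l r n := sum_le_sum_of_subset_of_nonneg (fun i hi => mem_range.2 (mem_Ico.1 hi).2)
          fun i _ _ => (tp_pos hl hr i).le
  have hhalf : (n : ℝ) ≤ 2 * ((n - M : ℕ) : ℝ) := by
    rw [Nat.cast_sub (by omega)]
    have : (2 * M : ℝ) ≤ n := by exact_mod_cast hn
    linarith
  calc (n : ℝ) ≤ ε * (((n - M : ℕ) : ℝ) * (2 / ε)) := by field_simp; linarith
    _ ≤ ε * xp l r n := by gcongr

lemma transOp_ofReal_xp (hl : ∀ n, 1 ≤ n → 0 < l n) (hr : ∀ n, 1 ≤ n → 0 < r n)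
    (hlr : ∀ n, 1 ≤ n → l n + r n = 1) :
    transOp l r (fun n => ENNReal.ofReal (xp l r n)) = fun n => ENNReal.ofReal (xp l r n) := by
  funext n
  rcases n with _ | n
  · rfl
  · have hx := xp_nonneg hl hr
    rw [transOp, if_neg n.succ_ne_zero, ← ENNReal.ofReal_mul (hr _ n.succ_pos).le,
      ← ENNReal.ofReal_mul (hl _ n.succ_pos).le,
      ← ENNReal.ofReal_add (mul_nonneg (hr _ n.succ_pos).le (hx _))
        (mul_nonneg (hl _ n.succ_pos).le (hx _)), Nat.add_sub_cancel, xp_harmonic hr hlr n]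

end ScaleFunction

namespace IsBDChain

variable {Ω : Type*} [MeasurableSpace Ω] {P : Measure Ω} {X : ℕ → Ω → ℕ} {k : ℕ}
  {l r : ℕ → ℝ}

lemma measurableSet_eq (hC : IsBDChain P X k l r) (j n : ℕ) :
    MeasurableSet {ω | X j ω = n} :=
  hC.meas j (measurableSet_singleton n)

omit [MeasurableSpace Ω] in
lemma inter_step_eq {j n c : ℕ} {A : Set Ω} (hA : A ⊆ {ω | X j ω = n}) :
    A ∩ {ω | X j ω = n ∧ X (j + 1) ω = c} = A ∩ {ω | X (j + 1) ω = c} :=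
  Set.ext fun _ => ⟨fun h => ⟨h.1, h.2.2⟩, fun h => ⟨h.1, hA h.1, h.2⟩⟩

lemma measure_inter_step_up (hC : IsBDChain P X k l r) {j n : ℕ} (hn : 1 ≤ n) {A : Set Ω}
    (hA : MeasurableSet[natFilt X j] A) (hAn : A ⊆ {ω | X j ω = n}) :
    P (A ∩ {ω | X (j + 1) ω = n + 1}) = ENNReal.ofReal (r n) * P A := by
  simpa only [inter_step_eq hAn, Set.inter_eq_left.2 hAn] using hC.step_up j n hn A hA

lemma measure_inter_step_down (hC : IsBDChain P X k l r) {j n : ℕ} (hn : 1 ≤ n) {A : Set Ω}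
    (hA : MeasurableSet[natFilt X j] A) (hAn : A ⊆ {ω | X j ω = n}) :
    P (A ∩ {ω | X (j + 1) ω = n - 1}) = ENNReal.ofReal (l n) * P A := by
  simpa only [inter_step_eq hAn, Set.inter_eq_left.2 hAn] using hC.step_down j n hn A hA

lemma ae_step_eq_add_one_or_sub_one (hC : IsBDChain P X k l r) :
    ∀ᵐ ω ∂P, ∀ j, 1 ≤ X j ω → X (j + 1) ω = X j ω + 1 ∨ X (j + 1) ω = X j ω - 1 := by
  have := hC.isProb
  refine ae_all_iff.2 fun j => ?_
  have key : ∀ n, ∀ᵐ ω ∂P, X j ω = n → 1 ≤ n → X (j + 1) ω = n + 1 ∨ X (j + 1) ω = n - 1 := by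
    intro n
    rcases Nat.eq_zero_or_pos n with rfl | hn
    · exact ae_of_all _ fun ω _ h => absurd h (by omega)
    set E := {ω | X j ω = n}
    set F := {ω | X (j + 1) ω = n + 1} ∪ {ω | X (j + 1) ω = n - 1}
    have hE : MeasurableSet[natFilt X j] E :=
      measurable_natFilt X le_rfl (measurableSet_singleton n)
    have hcover : P (E ∩ F) = P E := by
      rw [Set.inter_union_distrib_left, measure_union _ ((hC.measurableSet_eq j n).inter
        (hC.measurableSet_eq (j + 1) (n - 1))), hC.measure_inter_step_up hn hE subset_rfl,
        hC.measure_inter_step_down hn hE subset_rfl, ← add_mul,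
        ← ENNReal.ofReal_add (hC.r_pos n hn).le (hC.l_pos n hn).le, add_comm, hC.lr_one n hn,
        ENNReal.ofReal_one, one_mul]
      exact Set.disjoint_left.2 fun ω h1 h2 => by
        have : n + 1 = n - 1 := h1.2.symm.trans h2.2
        omega
    have hnull : P (E \ F) = 0 := by
      rw [← Set.sdiff_self_inter, measure_sdiff Set.inter_subset_left
        ((hC.measurableSet_eq _ _).inter ((hC.measurableSet_eq _ _).union
          (hC.measurableSet_eq _ _))).nullMeasurableSet (measure_ne_top P _), hcover, tsub_self]
    refine measure_mono_null (fun ω hω => ?_) hnull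
    exact ⟨by_contra fun h => hω fun h' => absurd h' h, fun hF => hω fun _ _ => hF⟩
  filter_upwards [ae_all_iff.2 key] with ω hω h1 using hω _ rfl h1

lemma setLIntegral_comp_succ_of_subset (hC : IsBDChain P X k l r) (g : ℕ → ℝ≥0∞) {j n : ℕ}
    {B : Set Ω} (hB : MeasurableSet[natFilt X j] B) (hBn : B ⊆ {ω | X j ω = n}) :
    ∫⁻ ω in B, g (X (j + 1) ω) ∂P = transOp l r g n * P B := by
  have hBm : MeasurableSet B := natFilt_le X hC.meas j _ hB
  rcases Nat.eq_zero_or_pos n with rfl | hn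
  · have hae : ∀ᵐ ω ∂P.restrict B, g (X (j + 1) ω) = g 0 := by
      filter_upwards [ae_restrict_of_ae hC.absorb, ae_restrict_mem hBm] with ω habs hω
      rw [habs j (hBn hω)]
    rw [lintegral_congr_ae hae, setLIntegral_const, transOp, if_pos rfl]
  set U := {ω | X (j + 1) ω = n + 1}
  set D := {ω | X (j + 1) ω = n - 1}
  have hae : ∀ᵐ ω ∂P.restrict B, g (X (j + 1) ω) =
      U.indicator (fun _ => g (n + 1)) ω + D.indicator (fun _ => g (n - 1)) ω := by
    filter_upwards [ae_restrict_of_ae hC.ae_step_eq_add_one_or_sub_one, ae_restrict_mem hBm]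
      with ω hstep hω
    have hX : X j ω = n := hBn hω
    rcases hstep j (hX ▸ hn) with h | h <;> rw [hX] at h <;>
      simp only [Set.indicator, U, D, Set.mem_ofPred_eq, h] <;> split_ifs <;> first | omega | simp
  rw [lintegral_congr_ae hae, lintegral_add_left (measurable_const.indicator
      (hC.measurableSet_eq _ _)), lintegral_indicator_const (hC.measurableSet_eq _ _),
    lintegral_indicator_const (hC.measurableSet_eq _ _),
    Measure.restrict_apply (hC.measurableSet_eq _ _),
    Measure.restrict_apply (hC.measurableSet_eq _ _), Set.inter_comm,
    hC.measure_inter_step_up hn hB hBn, Set.inter_comm, hC.measure_inter_step_down hn hB hBn,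
    transOp, if_neg hn.ne']
  ring

lemma setLIntegral_comp_succ (hC : IsBDChain P X k l r) (g : ℕ → ℝ≥0∞) {j : ℕ} {A : Set Ω}
    (hA : MeasurableSet[natFilt X j] A) :
    ∫⁻ ω in A, g (X (j + 1) ω) ∂P = ∫⁻ ω in A, transOp l r g (X j ω) ∂P := by
  have hAm := natFilt_le X hC.meas j _ hA
  rw [setLIntegral_eq_tsum_fiber (hC.meas j) hAm, setLIntegral_eq_tsum_fiber (hC.meas j) hAm]
  refine tsum_congr fun n => ?_
  have hfib : MeasurableSet[natFilt X j] (A ∩ {ω | X j ω = n}) :=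
    hA.inter (measurable_natFilt X le_rfl (measurableSet_singleton n))
  rw [hC.setLIntegral_comp_succ_of_subset g hfib Set.inter_subset_right, ← setLIntegral_const]
  exact setLIntegral_congr_fun (hAm.inter (hC.measurableSet_eq j n)) fun ω hω => by rw [hω.2]

lemma lintegral_comp_min_eq (hC : IsBDChain P X k l r) {g : ℕ → ℝ≥0∞}
    (hg : transOp l r g = g) {T : Ω → ℕ} (hT : IsBDStop X T) (j : ℕ) :
    ∫⁻ ω, g (X (min (T ω) j) ω) ∂P = g k := by
  have := hC.isProb
  induction j with
  | zero =>
    rw [lintegral_congr_ae (hC.init.mono fun ω h => by rw [Nat.min_zero, h]), lintegral_const,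
      measure_univ, mul_one]
  | succ j ih =>
    set B := {ω | j < T ω}
    have hB := hT.measurableSet_lt j
    have hBm : MeasurableSet B := natFilt_le X hC.meas j _ hB
    have hon : ∫⁻ ω in B, g (X (min (T ω) (j + 1)) ω) ∂P =
        ∫⁻ ω in B, g (X (min (T ω) j) ω) ∂P := calc
      _ = ∫⁻ ω in B, g (X (j + 1) ω) ∂P :=
          setLIntegral_congr_fun hBm fun ω (hω : j < T ω) => by rw [min_eq_right hω]
      _ = ∫⁻ ω in B, g (X j ω) ∂P := by rw [hC.setLIntegral_comp_succ g hB, hg]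
      _ = _ := setLIntegral_congr_fun hBm fun ω (hω : j < T ω) => by rw [min_eq_right hω.le]
    have hoff : ∫⁻ ω in Bᶜ, g (X (min (T ω) (j + 1)) ω) ∂P =
        ∫⁻ ω in Bᶜ, g (X (min (T ω) j) ω) ∂P :=
      setLIntegral_congr_fun hBm.compl fun ω (hω : ¬ j < T ω) => by
        rw [min_eq_left (by omega), min_eq_left (by omega)]
    rw [← ih, ← lintegral_add_compl _ hBm, hon, hoff, lintegral_add_compl _ hBm]

lemma lintegral_comp_eq (hC : IsBDChain P X k l r) {g : ℕ → ℝ≥0∞} (hg : transOp l r g = g)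
    (j : ℕ) : ∫⁻ ω, g (X j ω) ∂P = g k := by
  simpa using hC.lintegral_comp_min_eq hg (T := fun _ => j) (fun _ => MeasurableSet.const _) j

lemma lintegral_comp_le (hC : IsBDChain P X k l r) {g : ℕ → ℝ≥0∞} (hg : transOp l r g = g)
    {T : Ω → ℕ} (hT : IsBDStop X T) : ∫⁻ ω, g (X (T ω) ω) ∂P ≤ g k := by
  have hTm := hT.measurable hC.meas
  calc ∫⁻ ω, g (X (T ω) ω) ∂P = ∫⁻ ω, liminf (fun j => g (X (min (T ω) j) ω)) atTop ∂P :=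
        lintegral_congr fun ω => (tendsto_atTop_of_eventually_const (i₀ := T ω)
          fun j hj => by rw [min_eq_left hj]).liminf_eq.symm
    _ ≤ liminf (fun j => ∫⁻ ω, g (X (min (T ω) j) ω) ∂P) atTop :=
        lintegral_liminf_le fun j =>
          measurable_from_nat.comp (measurable_comp_time hC.meas (hTm.min measurable_const))
    _ = g k := by simp only [hC.lintegral_comp_min_eq hg hT, liminf_const]

lemma martingale_xp (hC : IsBDChain P X k l r) :
    Martingale (fun m ω => xp l r (X m ω)) (natFiltration X hC.meas) P := by
  have := hC.isProb
  have hharm := transOp_ofReal_xp hC.l_pos hC.r_pos hC.lr_one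
  have hnn : ∀ m, 0 ≤ᵐ[P] fun ω => xp l r (X m ω) :=
    fun m => ae_of_all _ fun ω => xp_nonneg hC.l_pos hC.r_pos _
  have hint : ∀ m, Integrable (fun ω => xp l r (X m ω)) P := fun m =>
    ⟨((measurable_from_nat (f := xp l r)).comp (hC.meas m)).aestronglyMeasurable,
      (hasFiniteIntegral_iff_ofReal (hnn m)).2 <| by
        rw [hC.lintegral_comp_eq hharm]
        exact ENNReal.ofReal_lt_top⟩
  refine martingale_of_setIntegral_eq_succ
    (fun m => ((measurable_from_nat (f := xp l r)).comp
      (measurable_natFilt X le_rfl)).stronglyMeasurable)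
    hint fun m s hs => ?_
  rw [integral_eq_lintegral_of_nonneg_ae (ae_restrict_of_ae (hnn m))
      (hint m).aestronglyMeasurable.restrict,
    integral_eq_lintegral_of_nonneg_ae (ae_restrict_of_ae (hnn (m + 1)))
      (hint (m + 1)).aestronglyMeasurable.restrict,
    hC.setLIntegral_comp_succ (fun n => ENNReal.ofReal (xp l r n)) hs, hharm]

lemma ae_hit0_ne_top (hC : IsBDChain P X k l r) (htlim : Tendsto (tp l r) atTop atTop) :
    ∀ᵐ ω ∂P, hit0 X ω ≠ ⊤ := by
  have := hC.isProb
  have hbdd : ∀ m, eLpNorm (fun ω => xp l r (X m ω)) 1 P ≤ ENNReal.ofReal (xp l r k) := by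
    intro m
    rw [eLpNorm_one_eq_lintegral_enorm,
      ← hC.lintegral_comp_eq (transOp_ofReal_xp hC.l_pos hC.r_pos hC.lr_one) m]
    exact (lintegral_congr fun ω => Real.enorm_of_nonneg (xp_nonneg hC.l_pos hC.r_pos _)).le
  obtain ⟨N, hN⟩ : ∃ N, ∀ n, tp l r N ≤ tp l r n :=
    (Nat.cofinite_eq_atTop ▸ htlim).exists_forall_le
  have htN := tp_pos hC.l_pos hC.r_pos N
  filter_upwards [hC.martingale_xp.submartingale.exists_ae_tendsto_of_bdd hbdd,
    hC.ae_step_eq_add_one_or_sub_one] with ω ⟨c, hc⟩ hstep htop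
  have hpos : ∀ m, 1 ≤ X m ω := fun m =>
    Nat.one_le_iff_ne_zero.2 fun h0 => hitTime_ne_top_of_mem (S := {0}) h0 htop
  have hinc : ∀ m, tp l r N ≤ |xp l r (X (m + 1) ω) - xp l r (X m ω)| := by
    intro m
    obtain ⟨n, hn⟩ : ∃ n, X m ω = n + 1 := ⟨X m ω - 1, by have := hpos m; omega⟩
    rcases hstep m (hpos m) with h | h <;> rw [h, hn]
    · rw [xp_succ (n + 1), add_sub_cancel_left, abs_of_pos (tp_pos hC.l_pos hC.r_pos _)]
      exact hN _
    · rw [Nat.add_sub_cancel, xp_succ n, sub_add_cancel_left, abs_neg,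
        abs_of_pos (tp_pos hC.l_pos hC.r_pos _)]
      exact hN _
  have hlim : Tendsto (fun m => xp l r (X (m + 1) ω) - xp l r (X m ω)) atTop (𝓝 0) := by
    simpa using (hc.comp (tendsto_add_atTop_nat 1)).sub hc
  obtain ⟨m, hm⟩ := (hlim.eventually (Metric.ball_mem_nhds 0 htN)).exists
  exact (hinc m).not_gt (by simpa [Real.dist_eq] using hm)

end IsBDChain

theorem stmt1_general {Ω : Type*} [MeasurableSpace Ω] (P : Measure Ω) (X : ℕ → Ω → ℕ)
    (k : ℕ) (l r : ℕ → ℝ) (hC : IsBDChain P X k l r)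
    (htlim : Tendsto (tp l r) atTop atTop)
    (T : ℕ → Ω → ℕ) (hstop : ∀ m, IsBDStop X (T m))
    (hconv : ∀ᵐ ω ∂P, Tendsto (fun m => (T m ω : ℕ∞)) atTop (nhds (hit0 X ω))) :
    Tendsto (fun m => ∫⁻ ω, (X (T m ω) ω : ℝ≥0∞) ∂P) atTop (nhds 0) := by
  have := hC.isProb
  refine tendsto_lintegral_of_superlinear_bound
    (fun m => measurable_comp_time hC.meas ((hstop m).measurable hC.meas))
    (fun ε hε => eventually_natCast_le_mul_xp hC.l_pos hC.r_pos htlim hε) ENNReal.ofReal_ne_top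
    (fun m => hC.lintegral_comp_le (transOp_ofReal_xp hC.l_pos hC.r_pos hC.lr_one) (hstop m)) ?_
  filter_upwards [hC.ae_hit0_ne_top htlim, hconv] with ω hfin hω
  obtain ⟨j, hj⟩ := WithTop.ne_top_iff_exists.1 hfin
  rw [← hj] at hω
  filter_upwards [tendsto_pure.1 (ENat.nhds_natCast j ▸ hω)] with m hm
  rw [Nat.cast_inj.1 hm]
  exact mem_of_hitTime_eq hj.symm

/-- If `t_n → ∞`, then for any non-decreasing sequence of stopping
times `T_m` with `E[T_m] < ∞` and `T_m → T_∂` a.s., `E[X_{T_m}] → 0`. -/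
theorem stmt1 {Ω : Type*} [MeasurableSpace Ω] (P : Measure Ω) (X : ℕ → Ω → ℕ)
    (k : ℕ) (l r : ℕ → ℝ) (hC : IsBDChain P X k l r)
    (htlim : Tendsto (tp l r) atTop atTop)
    (T : ℕ → Ω → ℕ) (hstop : ∀ m, IsBDStop X (T m))
    (hmono : ∀ ω, Monotone fun m => T m ω)
    (hint : ∀ m, ∫⁻ ω, (T m ω : ℝ≥0∞) ∂P < ⊤)
    (hconv : ∀ᵐ ω ∂P, Tendsto (fun m => (T m ω : ℕ∞)) atTop (nhds (hit0 X ω))) :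
    Tendsto (fun m => ∫⁻ ω, (X (T m ω) ω : ℝ≥0∞) ∂P) atTop (nhds 0) :=
  stmt1_general P X k l r hC htlim T hstop hconv
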